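/- Let ε : M₄ → M₄ be a ℂ-linear map such that: (i) ε(m) ∈ N for every m ∈ M₄; (ii) ε is an N-bimodule map, i.e. ε((n ⊗ₖ 1) * m * (n' ⊗ₖ 1)) = (n ⊗ₖ 1) * ε(m) * (n' ⊗ₖ 1) for all n, n' ∈ M₂ and m ∈ M₄; (iii) ε is parity covariant, i.e. ε(Θ₂(m)) = Θ₂(ε(m)) for all m ∈ M₄. Then for every y in the subalgebra of M₄ generated by a₂ and star a₂ (the second-site algebra), there exists c ∈ ℂ with ε(y) = c • 1. -/
import Mathlib


namespace CARMarkov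

open Kronecker

noncomputable def a : Matrix (Fin 2) (Fin 2) ℂ := !![0,1;0,0]

noncomputable def σz : Matrix (Fin 2) (Fin 2) ℂ := !![1,0;0,-1]

noncomputable def a₁ : Matrix (Fin 2 × Fin 2) (Fin 2 × Fin 2) ℂ :=
  a ⊗ₖ (1 : Matrix (Fin 2) (Fin 2) ℂ)

noncomputable def a₂ : Matrix (Fin 2 × Fin 2) (Fin 2 × Fin 2) ℂ :=
  σz ⊗ₖ a

noncomputable def Θ₂ (x : Matrix (Fin 2 × Fin 2) (Fin 2 × Fin 2) ℂ) :
    Matrix (Fin 2 × Fin 2) (Fin 2 × Fin 2) ℂ :=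
  (σz ⊗ₖ σz) * x * (σz ⊗ₖ σz)

/-- The first-site subalgebra `N = {n ⊗ₖ 1 : n ∈ M₂}` of `M₄`. -/
def firstSite : Set (Matrix (Fin 2 × Fin 2) (Fin 2 × Fin 2) ℂ) :=
  {m | ∃ n : Matrix (Fin 2) (Fin 2) ℂ, m = n ⊗ₖ (1 : Matrix (Fin 2) (Fin 2) ℂ)}

private lemma kron_one_inj {A B : Matrix (Fin 2) (Fin 2) ℂ}
    (h : A ⊗ₖ (1 : Matrix (Fin 2) (Fin 2) ℂ) = B ⊗ₖ (1 : Matrix (Fin 2) (Fin 2) ℂ)) :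
    A = B := by
  ext i j
  have := congrFun (congrFun h (i, 0)) (j, 0)
  simpa [Matrix.kroneckerMap_apply] using this

private lemma comm_scalar (n : Matrix (Fin 2) (Fin 2) ℂ)
    (h : ∀ m : Matrix (Fin 2) (Fin 2) ℂ, m * n = n * m) :
    n = n 0 0 • 1 := by
  have h1 := h !![0,1;0,0]
  have h2 := h !![0,0;1,0]
  have e1 := congrFun (congrFun h1 0) 0
  have e2 := congrFun (congrFun h1 0) 1
  have e3 := congrFun (congrFun h2 1) 1
  have e4 := congrFun (congrFun h2 1) 0
  simp [Matrix.mul_apply, Fin.sum_univ_succ] at e1 e2 e3 e4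
  ext i j
  fin_cases i <;> fin_cases j <;>
    simp [Matrix.one_apply] <;> first | exact e3 | exact e1 | exact e2

private lemma σz_sq : σz * σz = 1 := by
  simp [σz, Matrix.mul_fin_two]
  norm_num [← Matrix.one_fin_two]

/-- A parity-covariant `N`-bimodule projection-like map onto the first site
is scalar on the second-site algebra. -/
theorem parity_covariant_bimodule_map_scalar_on_second_site
    (ε : Matrix (Fin 2 × Fin 2) (Fin 2 × Fin 2) ℂ →ₗ[ℂ]
         Matrix (Fin 2 × Fin 2) (Fin 2 × Fin 2) ℂ)
    (hrange : ∀ m, ε m ∈ firstSite)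
    (hbimod : ∀ (n n' : Matrix (Fin 2) (Fin 2) ℂ)
        (m : Matrix (Fin 2 × Fin 2) (Fin 2 × Fin 2) ℂ),
        ε ((n ⊗ₖ (1 : Matrix (Fin 2) (Fin 2) ℂ)) * m *
           (n' ⊗ₖ (1 : Matrix (Fin 2) (Fin 2) ℂ)))
        = (n ⊗ₖ (1 : Matrix (Fin 2) (Fin 2) ℂ)) * ε m *
          (n' ⊗ₖ (1 : Matrix (Fin 2) (Fin 2) ℂ)))
    (hparity : ∀ m, ε (Θ₂ m) = Θ₂ (ε m)) :
    ∀ y ∈ Algebra.adjoin ℂ ({a₂, star a₂} : Set (Matrix (Fin 2 × Fin 2) (Fin 2 × Fin 2) ℂ)),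
      ∃ c : ℂ, ε y = c • (1 : Matrix (Fin 2 × Fin 2) (Fin 2 × Fin 2) ℂ) := by
  -- Step 1: ε of anything of the form 1 ⊗ₖ p is scalar.
  have key1 : ∀ p : Matrix (Fin 2) (Fin 2) ℂ, ∃ c : ℂ,
      ε ((1 : Matrix (Fin 2) (Fin 2) ℂ) ⊗ₖ p) = c • 1 := by
    intro p
    obtain ⟨n, hn⟩ := hrange ((1 : Matrix (Fin 2) (Fin 2) ℂ) ⊗ₖ p)
    have hcomm : ∀ m : Matrix (Fin 2) (Fin 2) ℂ, m * n = n * m := by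
      intro m
      have hL := hbimod m 1 ((1 : Matrix (Fin 2) (Fin 2) ℂ) ⊗ₖ p)
      have hR := hbimod 1 m ((1 : Matrix (Fin 2) (Fin 2) ℂ) ⊗ₖ p)
      rw [Matrix.one_kronecker_one, mul_one, mul_one, hn] at hL
      rw [Matrix.one_kronecker_one, one_mul, one_mul, hn] at hR
      have heq : ε ((m ⊗ₖ (1 : Matrix (Fin 2) (Fin 2) ℂ)) *
          ((1 : Matrix (Fin 2) (Fin 2) ℂ) ⊗ₖ p))
          = ε (((1 : Matrix (Fin 2) (Fin 2) ℂ) ⊗ₖ p) *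
            (m ⊗ₖ (1 : Matrix (Fin 2) (Fin 2) ℂ))) := by
        rw [← Matrix.mul_kronecker_mul, ← Matrix.mul_kronecker_mul]
        simp
      rw [hL, hR] at heq
      apply kron_one_inj
      have e1 : (m * n) ⊗ₖ (1 : Matrix (Fin 2) (Fin 2) ℂ)
          = (m ⊗ₖ (1 : Matrix (Fin 2) (Fin 2) ℂ)) * (n ⊗ₖ (1 : Matrix (Fin 2) (Fin 2) ℂ)) := by
        rw [← Matrix.mul_kronecker_mul, one_mul]
      have e2 : (n * m) ⊗ₖ (1 : Matrix (Fin 2) (Fin 2) ℂ)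
          = (n ⊗ₖ (1 : Matrix (Fin 2) (Fin 2) ℂ)) * (m ⊗ₖ (1 : Matrix (Fin 2) (Fin 2) ℂ)) := by
        rw [← Matrix.mul_kronecker_mul, one_mul]
      rw [e1, e2]
      exact heq
    refine ⟨n 0 0, ?_⟩
    rw [hn, comm_scalar n hcomm, Matrix.smul_kronecker, Matrix.one_kronecker_one]
    simp [Matrix.smul_apply]
  -- Step 2: ε of anything of the form σz ⊗ₖ q with q odd is zero.
  have key0 : ∀ q : Matrix (Fin 2) (Fin 2) ℂ, σz * q = -(q * σz) →
      ε (σz ⊗ₖ q) = 0 := by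
    intro q hq
    obtain ⟨c, hc⟩ := key1 q
    have hfac : σz ⊗ₖ q = (σz ⊗ₖ (1 : Matrix (Fin 2) (Fin 2) ℂ)) *
        (((1 : Matrix (Fin 2) (Fin 2) ℂ)) ⊗ₖ q) *
        ((1 : Matrix (Fin 2) (Fin 2) ℂ) ⊗ₖ (1 : Matrix (Fin 2) (Fin 2) ℂ)) := by
      rw [Matrix.one_kronecker_one, mul_one, ← Matrix.mul_kronecker_mul, mul_one, one_mul]
    have hE : ε (σz ⊗ₖ q) = c • (σz ⊗ₖ (1 : Matrix (Fin 2) (Fin 2) ℂ)) := by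
      rw [hfac, hbimod, hc]
      simp
    have hodd : Θ₂ (σz ⊗ₖ q) = -(σz ⊗ₖ q) := by
      unfold Θ₂
      rw [← Matrix.mul_kronecker_mul, ← Matrix.mul_kronecker_mul]
      have h1 : σz * q * σz = -q := by
        rw [hq, neg_mul, mul_assoc, σz_sq, mul_one]
      have h2 : σz * σz * σz = σz := by rw [σz_sq, one_mul]
      rw [h1, h2]
      ext ⟨i, k⟩ ⟨j, l⟩
      simp [Matrix.kroneckerMap_apply, mul_neg]
    have hΘ : Θ₂ (c • (σz ⊗ₖ (1 : Matrix (Fin 2) (Fin 2) ℂ)))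
        = c • (σz ⊗ₖ (1 : Matrix (Fin 2) (Fin 2) ℂ)) := by
      unfold Θ₂
      rw [Matrix.mul_smul, Matrix.smul_mul]
      congr 1
      rw [← Matrix.mul_kronecker_mul, ← Matrix.mul_kronecker_mul]
      simp [σz_sq]
    have hp := hparity (σz ⊗ₖ q)
    rw [hodd, map_neg, hE, hΘ] at hp
    have h2 : (2 : ℂ) • (c • (σz ⊗ₖ (1 : Matrix (Fin 2) (Fin 2) ℂ))) = 0 := by
      rw [two_smul]
      exact neg_eq_iff_add_eq_zero.mp hp
    rw [smul_eq_zero] at h2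
    rcases h2 with h2 | h2
    · exact absurd h2 two_ne_zero
    · rw [hE, h2]
  -- Step 3: every element of the adjoin has the form 1 ⊗ₖ p + σz ⊗ₖ q with p even, q odd.
  intro y hy
  have hform : ∃ p q : Matrix (Fin 2) (Fin 2) ℂ,
      σz * p = p * σz ∧ σz * q = -(q * σz) ∧
      y = (1 : Matrix (Fin 2) (Fin 2) ℂ) ⊗ₖ p + σz ⊗ₖ q := by
    induction hy using Algebra.adjoin_induction with
    | mem x hx =>
      rcases hx with hx | hx
      · refine ⟨0, a, by simp, ?_, ?_⟩
        · ext i j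
          fin_cases i <;> fin_cases j <;>
            simp [σz, a, Matrix.mul_apply, Fin.sum_univ_succ]
        · rw [hx, a₂]
          simp
      · simp only [Set.mem_singleton_iff] at hx
        refine ⟨0, !![0,0;1,0], by simp, ?_, ?_⟩
        · ext i j
          fin_cases i <;> fin_cases j <;>
            simp [σz, Matrix.mul_apply, Fin.sum_univ_succ]
        · rw [hx]
          have : star a₂ = σz ⊗ₖ !![(0:ℂ),0;1,0] := by
            ext ⟨i, k⟩ ⟨j, l⟩
            fin_cases i <;> fin_cases j <;> fin_cases k <;> fin_cases l <;>
              simp [a₂, σz, a, Matrix.conjTranspose_apply, Matrix.kroneckerMap_apply]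
          rw [this]
          simp
    | algebraMap r =>
      refine ⟨r • 1, 0, ?_, by simp, ?_⟩
      · rw [Matrix.mul_smul, Matrix.smul_mul, mul_one, one_mul]
      · rw [Matrix.kronecker_zero, add_zero, Matrix.kronecker_smul,
          Matrix.one_kronecker_one, Algebra.algebraMap_eq_smul_one]
    | add x z hx hz ihx ihz =>
      obtain ⟨p, q, hp, hq, rfl⟩ := ihx
      obtain ⟨p', q', hp', hq', rfl⟩ := ihz
      refine ⟨p + p', q + q', ?_, ?_, ?_⟩
      · rw [mul_add, add_mul, hp, hp']
      · rw [mul_add, add_mul, hq, hq', neg_add]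
      · rw [Matrix.kronecker_add, Matrix.kronecker_add]
        abel
    | mul x z hx hz ihx ihz =>
      obtain ⟨p, q, hp, hq, rfl⟩ := ihx
      obtain ⟨p', q', hp', hq', rfl⟩ := ihz
      refine ⟨p * p' + q * q', p * q' + q * p', ?_, ?_, ?_⟩
      · rw [mul_add, add_mul]
        congr 1
        · rw [← mul_assoc, hp, mul_assoc, hp', mul_assoc]
        · rw [← mul_assoc, hq, neg_mul, mul_assoc, hq', mul_neg, neg_neg, mul_assoc]
      · rw [mul_add, add_mul, neg_add]
        congr 1
        · rw [← mul_assoc, hp, mul_assoc, hq', mul_neg, mul_assoc]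
        · rw [← mul_assoc, hq, neg_mul, mul_assoc, hp', mul_assoc]
      · rw [add_mul, mul_add, mul_add,
          ← Matrix.mul_kronecker_mul, ← Matrix.mul_kronecker_mul,
          ← Matrix.mul_kronecker_mul, ← Matrix.mul_kronecker_mul,
          one_mul, mul_one, one_mul, σz_sq,
          Matrix.kronecker_add, Matrix.kronecker_add]
        abel
  obtain ⟨p, q, hp, hq, rfl⟩ := hform
  obtain ⟨c, hc⟩ := key1 p
  refine ⟨c, ?_⟩
  rw [map_add, hc, key0 q hq, add_zero]

end CARMarkov
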